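/- For all n ≥ 2, the number of permutations π of {1,…,n} with ssc(π) = n−1 equals (n−2)!. -/

import Mathlib

/-- The largest letter of a word (`0` for the empty word). -/
def listMax (l : List ℕ) : ℕ := l.foldr max 0

lemma listMax_mem {l : List ℕ} (h : l ≠ []) : listMax l ∈ l := by
  induction l with
  | nil => simp at h
  | cons a t ih =>
    rcases eq_or_ne t [] with rfl | ht
    · simp [listMax]
    · have ht' := ih ht
      have hcons : listMax (a :: t) = max a (listMax t) := rfl
      rcases le_total a (listMax t) with hle | hle
      · rw [hcons, max_eq_right hle]; exact List.mem_cons_of_mem _ ht'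
      · rw [hcons, max_eq_left hle]; exact List.mem_cons_self

/-- The stack-sorting operator `S`: `S` of the empty word is the empty word, and
if `π` is nonempty, writing `π = L·m·R` where `m` is the greatest letter of `π`,
then `S(π) = S(L)·S(R)·m`. -/
def stackSort : List ℕ → List ℕ
  | [] => []
  | x :: xs =>
    stackSort ((x :: xs).take ((x :: xs).idxOf (listMax (x :: xs)))) ++
      stackSort ((x :: xs).drop ((x :: xs).idxOf (listMax (x :: xs)) + 1)) ++
      [listMax (x :: xs)]
termination_by l => l.length
decreasing_by
  · have hm : listMax (x :: xs) ∈ x :: xs := listMax_mem (by simp)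
    have hi : (x :: xs).idxOf (listMax (x :: xs)) < (x :: xs).length :=
      List.idxOf_lt_length_iff.mpr hm
    simp only [List.length_take, List.length_cons] at *
    omega
  · simp only [List.length_drop, List.length_cons]
    omega

/-- `π` is a permutation of `{1, …, n}`, viewed as a word containing each of
`1, …, n` exactly once. -/
def IsPermWord (n : ℕ) (π : List ℕ) : Prop := π.Perm (List.range' 1 n)

/-- The stack-sorting complexity of `π`: the least `k ≥ 0` such that `S^k(π)`
is the identity word `1, 2, …, n` (where `n` is the length of `π`). -/
noncomputable def ssc (π : List ℕ) : ℕ :=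
  sInf {k : ℕ | stackSort^[k] π = List.range' 1 π.length}

/-!
After one pass of `S` the largest letter stands last, and `S(u·m) = S(u)·m` when `m` exceeds
every letter of `u`; so on a permutation of an interval of `n` letters, `S^k` acts after the
first pass as `S^(k-1)` on the other `n - 1` letters, and `S^(n-1)` sorts. Since sorted words
are fixed by `S`, `ssc π = n - 1` means exactly that `S^(n-2) π` is not sorted. By the same
recursion this happens iff `π` ends with `n, 1`: writing `π = L·n·R`, the word `S(L)·S(R)` ends
with `n-1, 1` iff `R` is the single letter `1`, because a nonempty `S(R)` ends with `max R`.
The permutations ending with `n, 1` are the `(n-2)!` orderings of `2, …, n-1` followed by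
`n, 1`.
-/

open List

theorem le_listMax {l : List ℕ} {x : ℕ} (hx : x ∈ l) : x ≤ listMax l := by
  induction l with
  | nil => simp at hx
  | cons a t ih =>
    rcases mem_cons.mp hx with rfl | hx
    · exact le_max_left _ _
    · exact (ih hx).trans (le_max_right _ _)

theorem listMax_eq_of_mem {l : List ℕ} {m : ℕ} (hm : m ∈ l) (h : ∀ x ∈ l, x ≤ m) :
    listMax l = m :=
  le_antisymm (h _ (listMax_mem (ne_nil_of_mem hm))) (le_listMax hm)

theorem stackSort_cons (x : ℕ) (xs : List ℕ) :
    stackSort (x :: xs) =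
      stackSort ((x :: xs).take ((x :: xs).idxOf (listMax (x :: xs)))) ++
      stackSort ((x :: xs).drop ((x :: xs).idxOf (listMax (x :: xs)) + 1)) ++
      [listMax (x :: xs)] := by
  rw [stackSort]

theorem stackSort_append_cons {L R : List ℕ} {m : ℕ} (hL : ∀ x ∈ L, x < m)
    (hR : ∀ x ∈ R, x ≤ m) : stackSort (L ++ m :: R) = stackSort L ++ stackSort R ++ [m] := by
  have hmax : listMax (L ++ m :: R) = m :=
    listMax_eq_of_mem (by simp) (by simp only [mem_append, mem_cons]; grind)
  have hidx : (L ++ m :: R).idxOf m = L.length := by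
    simp [idxOf_append_of_notMem fun hm => (hL m hm).false]
  obtain ⟨x, xs, hw⟩ := exists_cons_of_ne_nil (show L ++ m :: R ≠ [] by simp)
  rw [hw, stackSort_cons, ← hw, hmax, hidx]
  simp

theorem stackSort_perm (w : List ℕ) : stackSort w ~ w := by
  induction w using stackSort.induct with
  | case1 => simp [stackSort]
  | case2 x xs ih₁ ih₂ =>
    set w := x :: xs
    set i := w.idxOf (listMax w)
    have hi : i < w.length := idxOf_lt_length_iff.mpr (listMax_mem (cons_ne_nil x xs))
    calc stackSort w
        = stackSort (w.take i) ++ stackSort (w.drop (i + 1)) ++ [listMax w] :=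
          stackSort_cons x xs
      _ ~ w.take i ++ w.drop (i + 1) ++ [listMax w] := (ih₁.append ih₂).append_right _
      _ ~ w.take i ++ listMax w :: w.drop (i + 1) :=
        (perm_append_singleton _ _).trans perm_middle.symm
      _ = w := by rw [← getElem_idxOf hi, getElem_cons_drop, take_append_drop]

theorem stackSort_eq_append_listMax {w : List ℕ} (hw : w ≠ []) :
    ∃ v, stackSort w = v ++ [listMax w] := by
  obtain ⟨x, xs, rfl⟩ := exists_cons_of_ne_nil hw
  exact ⟨_, stackSort_cons x xs⟩

theorem stackSort_append_singleton {u : List ℕ} {m : ℕ} (h : ∀ x ∈ u, x < m) :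
    stackSort (u ++ [m]) = stackSort u ++ [m] := by
  simpa [stackSort] using stackSort_append_cons (R := []) h (by simp)

theorem stackSort_iterate_append_singleton {u : List ℕ} {m : ℕ} (h : ∀ x ∈ u, x < m) (k : ℕ) :
    stackSort^[k] (u ++ [m]) = stackSort^[k] u ++ [m] := by
  induction k generalizing u with
  | zero => rfl
  | succ k ih =>
    rw [Function.iterate_succ_apply, Function.iterate_succ_apply, stackSort_append_singleton h,
      ih fun x hx => h x ((stackSort_perm u).subset hx)]

theorem stackSort_range' (a n : ℕ) : stackSort (range' a n) = range' a n := by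
  induction n with
  | zero => simp [stackSort]
  | succ n ih => rw [range'_concat, stackSort_append_singleton (by simp), ih]

theorem append_pair_perm_range'_iff {σ : List ℕ} {a n : ℕ} :
    σ ++ [a + n + 1, a] ~ range' a (n + 2) ↔ σ ~ range' (a + 1) n := by
  have hσ : σ ++ [a + n + 1, a] ~ a :: (σ ++ [a + n + 1]) := by
    simpa using perm_append_singleton a (σ ++ [a + n + 1])
  have hr : range' a (n + 2) = a :: (range' (a + 1) n ++ [a + n + 1]) := by
    rw [range'_succ, range'_concat, one_mul, show a + 1 + n = a + n + 1 by omega]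
  rw [hσ.congr_left, hr, perm_cons, perm_append_right_iff]

theorem exists_eq_append_cons_of_perm_range' {w : List ℕ} {a n : ℕ}
    (hw : w ~ range' a (n + 1)) :
    ∃ L R, w = L ++ (a + n) :: R ∧ L ++ R ~ range' a n := by
  obtain ⟨L, R, rfl⟩ := append_of_mem (hw.mem_iff.mpr (by simp) : a + n ∈ w)
  refine ⟨L, R, rfl, ?_⟩
  rw [← perm_cons (a + n)]
  refine perm_middle.symm.trans (hw.trans ?_)
  simp [range'_concat]

theorem exists_stackSort_eq_of_perm_range' {w : List ℕ} {a n : ℕ}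
    (hw : w ~ range' a (n + 1)) :
    ∃ u, u ~ range' a n ∧ stackSort w = u ++ [a + n] := by
  obtain ⟨L, R, rfl, hLR⟩ := exists_eq_append_cons_of_perm_range' hw
  have hlt : ∀ x ∈ L ++ R, x < a + n := fun x hx => (mem_range'_1.mp (hLR.subset hx)).2
  refine ⟨stackSort L ++ stackSort R,
    ((stackSort_perm L).append (stackSort_perm R)).trans hLR, ?_⟩
  rw [stackSort_append_cons (fun x hx => hlt x (by simp [hx]))
    (fun x hx => (hlt x (by simp [hx])).le)]

theorem stackSort_iterate_of_perm_range' {w : List ℕ} {a n : ℕ} (hw : w ~ range' a (n + 1)) :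
    stackSort^[n] w = range' a (n + 1) := by
  induction n generalizing w with
  | zero => simp_all
  | succ n ih =>
    obtain ⟨u, hu, hSw⟩ := exists_stackSort_eq_of_perm_range' hw
    rw [Function.iterate_succ_apply, hSw,
      stackSort_iterate_append_singleton (fun x hx => (mem_range'_1.mp (hu.subset hx)).2), ih hu,
      range'_concat (n := n + 1)]
    simp

theorem pair_suffix_iff_of_stackSort_eq {w u : List ℕ} {a n : ℕ}
    (hw : w ~ range' a (n + 3)) (hu : stackSort w = u ++ [a + (n + 2)]) :
    [a + n + 1, a] <:+ u ↔ [a + (n + 2), a] <:+ w := by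
  constructor
  · rintro ⟨τ, rfl⟩
    obtain ⟨L, R, rfl, hLR⟩ := exists_eq_append_cons_of_perm_range' hw
    have hlt : ∀ x ∈ L ++ R, x < a + (n + 2) := fun x hx => (mem_range'_1.mp (hLR.subset hx)).2
    rw [stackSort_append_cons (fun x hx => hlt x (by simp [hx]))
      (fun x hx => (hlt x (by simp [hx])).le), append_cancel_right_eq] at hu
    have hlast := congrArg getLast? hu
    suffices hR : R = [a] from ⟨L, by rw [hR]⟩
    rcases eq_or_ne R [] with rfl | hR
    · obtain ⟨v, -, hv⟩ := exists_stackSort_eq_of_perm_range' (n := n + 1) (by simpa using hLR)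
      simp [hv, stackSort] at hlast
    · obtain ⟨v, hv⟩ := stackSort_eq_append_listMax hR
      have hmax : listMax R = a := by simpa [hv] using hlast
      have hRa : ∀ x ∈ R, x = a := fun x hx =>
        le_antisymm (hmax ▸ le_listMax hx)
          (mem_range'_1.mp (hLR.subset (mem_append_right L hx))).1
      have hnd : R.Nodup := (hLR.nodup_iff.mpr nodup_range').sublist (sublist_append_right L R)
      rw [eq_replicate_of_mem hRa, nodup_replicate] at hnd
      rw [eq_replicate_of_mem hRa, show R.length = 1 by have := length_pos_of_ne_nil hR; omega]
      rfl
  · rintro ⟨σ, rfl⟩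
    have hσ : σ ~ range' (a + 1) (n + 1) :=
      append_pair_perm_range'_iff.mp (by rwa [show a + (n + 1) + 1 = a + (n + 2) by omega])
    obtain ⟨v, -, hv⟩ := exists_stackSort_eq_of_perm_range' hσ
    rw [stackSort_append_cons (fun x hx => by have := mem_range'_1.mp (hσ.subset hx); omega)
      (by simp), append_cancel_right_eq, hv] at hu
    have hsingle : stackSort [a] = [a] := stackSort_range' a 1
    exact ⟨v, by simp [← hu, hsingle]; omega⟩

theorem stackSort_iterate_eq_range'_iff {w : List ℕ} {a n : ℕ} (hw : w ~ range' a (n + 2)) :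
    stackSort^[n] w = range' a (n + 2) ↔ ¬[a + n + 1, a] <:+ w := by
  induction n generalizing w with
  | zero =>
    rcases perm_pair.mp hw with rfl | rfl
    · refine iff_of_true rfl ?_
      rintro ⟨_ | ⟨x, _ | ⟨y, σ⟩⟩, h⟩ <;> simp at h
    · exact iff_of_false (by simp [range'_succ]) (by simp)
  | succ n ih =>
    obtain ⟨u, hu, hSw⟩ := exists_stackSort_eq_of_perm_range' hw
    rw [Function.iterate_succ_apply, hSw,
      stackSort_iterate_append_singleton (fun x hx => (mem_range'_1.mp (hu.subset hx)).2),
      range'_concat, one_mul, append_cancel_right_eq, ih hu,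
      pair_suffix_iff_of_stackSort_eq hw hSw, show a + (n + 1) + 1 = a + (n + 2) by omega]

theorem ssc_eq_succ_iff {π : List ℕ} {m : ℕ} (hπ : π ~ range' 1 (m + 2)) :
    ssc π = m + 1 ↔ [m + 2, 1] <:+ π := by
  have hlen : π.length = m + 2 := by simpa using hπ.length_eq
  have hclosed : ∀ k₁ k₂, k₁ ≤ k₂ → k₁ ∈ {k | stackSort^[k] π = range' 1 (m + 2)} →
      k₂ ∈ {k | stackSort^[k] π = range' 1 (m + 2)} := by
    intro k₁ k₂ hk (h : _ = _)
    rw [Set.mem_ofPred_eq, ← Nat.sub_add_cancel hk, Function.iterate_add_apply, h,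
      Function.iterate_fixed (stackSort_range' 1 (m + 2))]
  rw [ssc, hlen, Nat.sInf_upward_closed_eq_succ_iff hclosed, Set.mem_ofPred_eq,
    Set.mem_ofPred_eq, stackSort_iterate_of_perm_range' hπ, stackSort_iterate_eq_range'_iff hπ,
    add_comm 1 m]
  simp

theorem ncard_setOf_perm {α : Type*} {l : List α} (hl : l.Nodup) :
    {σ | σ ~ l}.ncard = l.length.factorial := by
  classical
  have hperms : {σ | σ ~ l} = l.permutations.toFinset := by
    ext
    simp [mem_permutations]
  rw [hperms, Set.ncard_coe_finset, toFinset_card_of_nodup (nodup_permutations _ hl),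
    length_permutations]

/-- For all `n ≥ 2`, the number of permutations `π` of `{1,…,n}` with
`ssc(π) = n−1` equals `(n−2)!`. -/
theorem card_ssc_eq_n_sub_one (n : ℕ) (hn : 2 ≤ n) :
    {π : List ℕ | IsPermWord n π ∧ ssc π = n - 1}.ncard = (n - 2).factorial := by
  obtain ⟨m, rfl⟩ := Nat.exists_eq_add_of_le' hn
  have hset : {π : List ℕ | IsPermWord (m + 2) π ∧ ssc π = m + 2 - 1} =
      (· ++ [m + 2, 1]) '' {σ | σ ~ range' 2 m} := by
    ext π
    constructor
    · rintro ⟨hπ, hssc⟩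
      obtain ⟨σ, rfl⟩ := (ssc_eq_succ_iff hπ).mp hssc
      exact ⟨σ, append_pair_perm_range'_iff.mp (by rwa [add_comm 1 m]), rfl⟩
    · rintro ⟨σ, hσ, rfl⟩
      have hπ : IsPermWord (m + 2) (σ ++ [m + 2, 1]) := by
        have := append_pair_perm_range'_iff.mpr hσ
        rwa [add_comm 1 m] at this
      exact ⟨hπ, (ssc_eq_succ_iff hπ).mpr ⟨σ, rfl⟩⟩
  rw [hset, Set.ncard_image_of_injective _ (append_left_injective _),
    ncard_setOf_perm nodup_range', length_range']
  rfl
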